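/- arXiv:math/9908039 — 2 statements merged into one kernel-verified Lean document; each statement's English description precedes it below -/
import Mathlib

section
/- Let W be a finite-dimensional complex vector space, W* its dual, V = ℂ × W × W* × ℂ, and let C be a cubic on W and C* a cubic on W*. Then the bilinear form Ω on V defined by Ω((α,r,r*,α*),(β,s,s*,β*)) = 6(αβ* − βα*) − (s*(r) − r*(s)) is alternating and nondegenerate, and it is invariant under every operator X from the following four families, i.e. Ω(X u, v) + Ω(u, X v) = 0 for all u, v ∈ V: (i) ρ_W(t) for t ∈ W; (ii) ρ_{W*}(t*) for t* ∈ W*; (iii) the grading operator E; (iv) ρ(ψ) for every ℂ-linear endomorphism ψ of W. -/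
noncomputable section

/-- `V = ℂ × W × W* × ℂ`. -/
abbrev VV (W : Type*) [AddCommGroup W] [Module ℂ W] :=
  ℂ × W × Module.Dual ℂ W × ℂ

/-- The symplectic form `Ω((α,r,r*,α*),(β,s,s*,β*)) = 6(αβ* − βα*) − (s*(r) − r*(s))`. -/
def OmegaForm {W : Type*} [AddCommGroup W] [Module ℂ W] (u v : VV W) : ℂ :=
  6 * (u.1 * v.2.2.2 - v.1 * u.2.2.2) - (v.2.2.1 u.2.1 - u.2.2.1 v.2.1)

/-- The action `ρ_W(t)(α,r,s*,β*) = (0, 3α·t, C r t, (1/2)·s*(t))`. -/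
def rhoW {W : Type*} [AddCommGroup W] [Module ℂ W]
    (C : W →ₗ[ℂ] W →ₗ[ℂ] Module.Dual ℂ W) (t : W) (w : VV W) : VV W :=
  (0, (3 * w.1) • t, C w.2.1 t, (1 / 2) * w.2.2.1 t)

/-- The action `ρ_{W*}(t*)(α,r,s*,β*) = ((1/2)·t*(r), C* s* t*, 3β*·t*, 0)`. -/
def rhoWs {W : Type*} [AddCommGroup W] [Module ℂ W]
    (Cs : Module.Dual ℂ W →ₗ[ℂ] Module.Dual ℂ W →ₗ[ℂ] W)
    (ts : Module.Dual ℂ W) (w : VV W) : VV W :=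
  ((1 / 2) * ts w.2.1, Cs w.2.2.1 ts, (3 * w.2.2.2) • ts, 0)

/-- The grading operator `E(α,r,s*,β*) = (−(3/2)α, −(1/2)r, (1/2)s*, (3/2)β*)`. -/
def gradE {W : Type*} [AddCommGroup W] [Module ℂ W] (w : VV W) : VV W :=
  (-(3 / 2) * w.1, (-(1 / 2) : ℂ) • w.2.1, ((1 / 2) : ℂ) • w.2.2.1, (3 / 2) * w.2.2.2)

/-- The action of `ψ ∈ End(W)`: `ρ(ψ)(α,r,s*,β*) = (0, ψ r, −s* ∘ ψ, 0)`. -/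
def rhoH {W : Type*} [AddCommGroup W] [Module ℂ W] (ψ : W →ₗ[ℂ] W) (w : VV W) : VV W :=
  (0, ψ w.2.1, -(w.2.2.1 ∘ₗ ψ), 0)

/-- The form `Ω` is alternating, nondegenerate, and invariant under the operators
`ρ_W(t)`, `ρ_{W*}(t*)`, `E` and `ρ(ψ)`. -/
theorem stmt0 {W : Type*} [AddCommGroup W] [Module ℂ W] [FiniteDimensional ℂ W]
    (C : W →ₗ[ℂ] W →ₗ[ℂ] Module.Dual ℂ W)
    (Cs : Module.Dual ℂ W →ₗ[ℂ] Module.Dual ℂ W →ₗ[ℂ] W)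
    (hC : ∀ r s t : W, C r s t = C s r t ∧ C r s t = C r t s)
    (hCs : ∀ a b c : Module.Dual ℂ W, c (Cs a b) = c (Cs b a) ∧ c (Cs a b) = b (Cs a c)) :
    (∀ u : VV W, OmegaForm u u = 0) ∧
    (∀ u : VV W, (∀ v : VV W, OmegaForm u v = 0) → u = 0) ∧
    (∀ v : VV W, (∀ u : VV W, OmegaForm u v = 0) → v = 0) ∧
    (∀ (t : W) (u v : VV W), OmegaForm (rhoW C t u) v + OmegaForm u (rhoW C t v) = 0) ∧
    (∀ (ts : Module.Dual ℂ W) (u v : VV W),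
      OmegaForm (rhoWs Cs ts u) v + OmegaForm u (rhoWs Cs ts v) = 0) ∧
    (∀ u v : VV W, OmegaForm (gradE u) v + OmegaForm u (gradE v) = 0) ∧
    (∀ (ψ : W →ₗ[ℂ] W) (u v : VV W),
      OmegaForm (rhoH ψ u) v + OmegaForm u (rhoH ψ v) = 0) := by
  refine ⟨?_, ?_, ?_, ?_, ?_, ?_, ?_⟩
  · intro u; simp only [OmegaForm]; ring
  · intro u hu
    have h1 := hu (0, 0, 0, 1)
    have h4 := hu (1, 0, 0, 0)
    simp only [OmegaForm, map_zero, LinearMap.zero_apply, mul_one, mul_zero, one_mul,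
      zero_mul, sub_zero, zero_sub, sub_self, neg_eq_zero] at h1 h4
    have h2 : u.2.1 = 0 := by
      rw [← Module.forall_dual_apply_eq_zero_iff ℂ]
      intro φ
      have := hu (0, 0, φ, 0)
      simp only [OmegaForm, map_zero, LinearMap.zero_apply, mul_zero, zero_mul,
        sub_zero, zero_sub, sub_self, neg_eq_zero, neg_neg] at this
      simpa using this
    have h3 : u.2.2.1 = 0 := by
      ext s
      have := hu (0, s, 0, 0)
      simp only [OmegaForm, map_zero, LinearMap.zero_apply, mul_zero, zero_mul,
        sub_zero, zero_sub, sub_self, neg_eq_zero, neg_neg] at this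
      simpa using this
    obtain ⟨a, b, c, d⟩ := u
    norm_num at h1 h4 h2 h3 ⊢
    simp_all [Prod.ext_iff]
  · intro v hv
    have h1 := hv (0, 0, 0, 1)
    have h4 := hv (1, 0, 0, 0)
    simp only [OmegaForm, map_zero, LinearMap.zero_apply, mul_one, mul_zero, one_mul,
      zero_mul, sub_zero, zero_sub, sub_self, neg_eq_zero] at h1 h4
    have h2 : v.2.1 = 0 := by
      rw [← Module.forall_dual_apply_eq_zero_iff ℂ]
      intro φ
      have := hv (0, 0, φ, 0)
      simp only [OmegaForm, map_zero, LinearMap.zero_apply, mul_zero, zero_mul,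
        sub_zero, zero_sub, sub_self, neg_eq_zero, neg_neg] at this
      simpa using this
    have h3 : v.2.2.1 = 0 := by
      ext s
      have := hv (0, s, 0, 0)
      simp only [OmegaForm, map_zero, LinearMap.zero_apply, mul_zero, zero_mul,
        sub_zero, zero_sub, sub_self, neg_eq_zero, neg_neg] at this
      simpa using this
    obtain ⟨a, b, c, d⟩ := v
    norm_num at h1 h4 h2 h3 ⊢
    simp_all [Prod.ext_iff]
  · intro t u v
    have key : C u.2.1 t v.2.1 = C v.2.1 t u.2.1 := by
      rw [(hC u.2.1 t v.2.1).1, (hC t u.2.1 v.2.1).2, (hC t v.2.1 u.2.1).1]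
    simp only [OmegaForm, rhoW, map_smul, smul_eq_mul]
    linear_combination key
  · intro ts u v
    have key : u.2.2.1 (Cs v.2.2.1 ts) = v.2.2.1 (Cs u.2.2.1 ts) := by
      rw [(hCs v.2.2.1 ts u.2.2.1).2, (hCs v.2.2.1 u.2.2.1 ts).1, (hCs u.2.2.1 v.2.2.1 ts).2]
    simp only [OmegaForm, rhoWs, LinearMap.smul_apply, smul_eq_mul]
    linear_combination key
  · intro u v
    simp only [OmegaForm, gradE, map_smul, LinearMap.smul_apply, smul_eq_mul]
    ring
  · intro ψ u v
    simp only [OmegaForm, rhoH, LinearMap.neg_apply, LinearMap.comp_apply]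
    ring
end
end

section
/- Fix n ≥ 1, let J be the standard 2n×2n symplectic matrix, and let Sp₂ₙ(ℂ) = {g : gᵀJg = J}. Let M, N be nonzero symmetric 2n×2n complex matrices of rank at most 2. Say M has isotropic range if xᵀJy = 0 for all x, y in the column space of M. Then there exist g ∈ Sp₂ₙ(ℂ) and a nonzero scalar λ ∈ ℂ with g·M·gᵀ = λ·N if and only if rank M = rank N and (M has isotropic range ↔ N has isotropic range). Consequently, up to the Sp₂ₙ(ℂ)-action and scalar, every such matrix is exactly one of: a rank-one matrix; a rank-two matrix whose range is a J-isotropic plane; or a rank-two matrix whose range is a non-isotropic plane. -/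
open Matrix

/-- A symmetric matrix `M` has isotropic range (for the standard symplectic form `J`) if
`xᵀ J y = 0` for all `x`, `y` in the column space of `M`. -/
def HasIsotropicRange (n : ℕ) (M : Matrix (Fin n ⊕ Fin n) (Fin n ⊕ Fin n) ℂ) : Prop :=
  ∀ u v : Fin n ⊕ Fin n → ℂ,
    dotProduct (M.mulVec u) ((Matrix.J (Fin n) ℂ).mulVec (M.mulVec v)) = 0

/-!
Over an algebraically closed field of characteristic `≠ 2`, a symmetric matrix of rank `r` is a
sum of `r` squares `x xᵀ`, and `g (x xᵀ) gᵀ = (g x)(g x)ᵀ`. So the rank-one case reduces to the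
transitivity of `Sp₂ₙ` on nonzero vectors, and the rank-two case `M = x xᵀ + y yᵀ` to its
transitivity on independent pairs `(x, y)` with a prescribed value of `ω(x, y) = xᵀ J y`
(a case of Witt's theorem; each step is a product of at most two symplectic transvections).
Scaling the target pair by `d` scales `ω` by `d²`, so up to a scalar only the vanishing of
`ω(x, y)` matters, and `M` has isotropic range exactly when `ω(x, y) = 0`.
-/

section LinearAlgebra

variable {K V : Type*} [Field K] [AddCommGroup V] [Module K V]

lemma LinearMap.exists_mem_apply_ne_zero_and_apply_ne_zero {S M N : Type*} [Semiring S]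
    [AddCommMonoid M] [AddCommMonoid N] [Module S M] [Module S N] {f g : M →ₗ[S] N}
    {W : Submodule S M} (hf : ∃ w ∈ W, f w ≠ 0) (hg : ∃ w ∈ W, g w ≠ 0) :
    ∃ w ∈ W, f w ≠ 0 ∧ g w ≠ 0 := by
  obtain ⟨w₁, hw₁, hf₁⟩ := hf
  obtain ⟨w₂, hw₂, hg₂⟩ := hg
  by_cases hg₁ : g w₁ = 0
  · by_cases hf₂ : f w₂ = 0
    · exact ⟨w₁ + w₂, W.add_mem hw₁ hw₂, by simpa [hf₂], by simpa [hg₁]⟩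
    · exact ⟨w₂, hw₂, hf₂, hg₂⟩
  · exact ⟨w₁, hw₁, hf₁, hg₁⟩

lemma LinearMap.SeparatingLeft.mem_span_singleton_of_ker_le {W : Type*} [AddCommGroup W]
    [Module K W] {B : V →ₗ[K] W →ₗ[K] K} (hB : B.SeparatingLeft) {x y : V}
    (h : ∀ w, B x w = 0 → B y w = 0) : y ∈ K ∙ x := by
  have : B y ∈ K ∙ B x := by
    simpa using mem_span_of_iInf_ker_le_ker (L := fun _ : Unit ↦ B x) (K := B y)
      (by simpa [SetLike.le_def] using h)
  obtain ⟨c, hc⟩ := Submodule.mem_span_singleton.mp this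
  refine Submodule.mem_span_singleton.mpr ⟨c, ?_⟩
  rw [← sub_eq_zero]
  exact hB _ fun w => by simp [← hc]

end LinearAlgebra

namespace Matrix

lemma mul_vecMulVec_mul_transpose {m n R : Type*} [Fintype n] [CommRing R] (g : Matrix m n R)
    (a b : n → R) : g * vecMulVec a b * gᵀ = vecMulVec (g *ᵥ a) (g *ᵥ b) := by
  rw [mul_vecMulVec, vecMulVec_mul, vecMul_transpose]

section Rank

variable {ι R K : Type*} [Fintype ι] [CommRing R] [Field K]

lemma rank_mul_mul_transpose [DecidableEq ι] {g : Matrix ι ι R} (hg : IsUnit g.det)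
    (M : Matrix ι ι R) : (g * M * gᵀ).rank = M.rank := by
  rw [rank_mul_eq_left_of_isUnit_det _ _ (by rwa [det_transpose]),
    rank_mul_eq_right_of_isUnit_det _ _ hg]

lemma eq_zero_of_rank_eq_zero [DecidableEq ι] {M : Matrix ι ι K} (h : M.rank = 0) : M = 0 := by
  rw [rank, Submodule.finrank_eq_zero, LinearMap.range_eq_bot, ← toLin'_apply'] at h
  exact toLin'.map_eq_zero_iff.mp h

lemma rank_lt_rank_of_ker_lt {A B : Matrix ι ι K}
    (h : LinearMap.ker A.mulVecLin < LinearMap.ker B.mulVecLin) : B.rank < A.rank := by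
  have hA := LinearMap.finrank_range_add_finrank_ker A.mulVecLin
  have hB := LinearMap.finrank_range_add_finrank_ker B.mulVecLin
  have := Submodule.finrank_lt_finrank_of_lt h
  rw [rank, rank]
  omega

lemma rank_vecMulVec_self_add_le_one {x y : ι → K} (hy : y ∈ K ∙ x) :
    (vecMulVec x x + vecMulVec y y).rank ≤ 1 := by
  obtain ⟨c, rfl⟩ := Submodule.mem_span_singleton.mp hy
  have : vecMulVec x x + vecMulVec (c • x) (c • x) = vecMulVec ((1 + c * c) • x) x := by
    ext i j
    simp only [add_apply, vecMulVec_apply, Pi.smul_apply, smul_eq_mul]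
    ring
  exact this ▸ rank_vecMulVec_le _ _

end Rank

section Symmetric

variable {ι K : Type*} [Field K] {M : Matrix ι ι K}

lemma isSymm_vecMulVec_self (x : ι → K) : (vecMulVec x x).IsSymm :=
  transpose_vecMulVec x x

variable [Fintype ι]

lemma IsSymm.mulVec_dotProduct (hM : M.IsSymm) (u w : ι → K) : M *ᵥ u ⬝ᵥ w = u ⬝ᵥ M *ᵥ w := by
  rw [dotProduct_mulVec, ← mulVec_transpose, hM.eq]

lemma IsSymm.exists_rank_sub_vecMulVec_self_lt [IsAlgClosed K] (hM : M.IsSymm) {u : ι → K}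
    (hu : u ⬝ᵥ M *ᵥ u ≠ 0) : ∃ x, (M - vecMulVec x x).rank < M.rank := by
  obtain ⟨d, hd⟩ := IsAlgClosed.exists_pow_nat_eq (u ⬝ᵥ M *ᵥ u) two_pos
  have hd0 : d ≠ 0 := by rintro rfl; exact hu (by simp [← hd])
  have hMu : M *ᵥ u ≠ 0 := by rintro h; exact hu (by simp [h])
  -- `M - x xᵀ` with `x = M u / d` kills `ker M` and also `u`.
  set x := d⁻¹ • (M *ᵥ u)
  have hx (w : ι → K) : x ⬝ᵥ w = d⁻¹ * (u ⬝ᵥ M *ᵥ w) := by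
    rw [smul_dotProduct, smul_eq_mul, hM.mulVec_dotProduct]
  have hker {w : ι → K} : w ∈ LinearMap.ker (M - vecMulVec x x).mulVecLin ↔
      M *ᵥ w = (x ⬝ᵥ w) • x := by
    simp [sub_eq_zero, vecMulVec_mulVec, op_smul_eq_smul]
  refine ⟨x, rank_lt_rank_of_ker_lt (lt_of_le_of_ne (fun w hw => ?_) fun h => hMu ?_)⟩
  · rw [LinearMap.mem_ker, mulVecLin_apply] at hw
    rw [hker, hw, hx, hw]
    simp
  · have hu' : u ∈ LinearMap.ker (M - vecMulVec x x).mulVecLin := by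
      rw [hker, hx, ← hd, smul_smul, pow_two, ← mul_assoc, inv_mul_cancel₀ hd0, one_mul,
        mul_inv_cancel₀ hd0, one_smul]
    rw [← h] at hu'
    simpa using hu'

variable [DecidableEq ι]

lemma IsSymm.exists_dotProduct_mulVec_self_ne_zero [Invertible (2 : K)] (hM : M.IsSymm)
    (h0 : M ≠ 0) : ∃ u, u ⬝ᵥ M *ᵥ u ≠ 0 := by
  simpa [toBilin'_apply'] using LinearMap.BilinForm.exists_bilinForm_self_ne_zero
    (toBilin'.map_ne_zero_iff.mpr h0)
    (LinearMap.BilinForm.isSymm_iff.mp (isSymm_toBilin'_iff_isSymm.mpr hM))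

variable [IsAlgClosed K] [Invertible (2 : K)]

theorem IsSymm.exists_eq_sum_vecMulVec_self (hM : M.IsSymm) {r : ℕ} (hr : M.rank ≤ r) :
    ∃ v : Fin r → ι → K, M = ∑ i, vecMulVec (v i) (v i) := by
  induction r generalizing M with
  | zero => exact ⟨![], by simpa using eq_zero_of_rank_eq_zero (Nat.le_zero.mp hr)⟩
  | succ r ih =>
    by_cases h0 : M = 0
    · exact ⟨0, by simp [h0]⟩
    obtain ⟨u, hu⟩ := hM.exists_dotProduct_mulVec_self_ne_zero h0
    obtain ⟨x, hx⟩ := hM.exists_rank_sub_vecMulVec_self_lt hu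
    obtain ⟨v, hv⟩ := ih (hM.sub (isSymm_vecMulVec_self x)) (by omega)
    exact ⟨Fin.cons x v, by simp [Fin.sum_univ_succ, ← hv]⟩

theorem IsSymm.exists_eq_vecMulVec_self_of_rank_eq_one (hM : M.IsSymm) (h : M.rank = 1) :
    ∃ x ≠ 0, M = vecMulVec x x := by
  obtain ⟨v, rfl⟩ := hM.exists_eq_sum_vecMulVec_self h.le
  refine ⟨v 0, fun h0 => ?_, by simp⟩
  simp [h0] at h

theorem IsSymm.exists_eq_vecMulVec_self_add_of_rank_eq_two (hM : M.IsSymm) (h : M.rank = 2) :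
    ∃ x y, x ≠ 0 ∧ y ∉ K ∙ x ∧ M = vecMulVec x x + vecMulVec y y := by
  obtain ⟨v, rfl⟩ := hM.exists_eq_sum_vecMulVec_self h.le
  rw [Fin.sum_univ_two] at h ⊢
  refine ⟨v 0, v 1, fun h0 => ?_, fun h1 => ?_, rfl⟩
  · have := rank_vecMulVec_le (v 1) (v 1)
    simp [h0] at h
    omega
  · have := rank_vecMulVec_self_add_le_one h1
    omega

end Symmetric

end Matrix

section Symplectic

variable {l : Type*} [Fintype l] [DecidableEq l] {R K : Type*} [CommRing R] [Field K]

variable (l R) in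
def symplecticForm : LinearMap.BilinForm R (l ⊕ l → R) := (J l R).toBilin'

local notation "ω" => symplecticForm _ _

lemma symplecticForm_apply (x y : l ⊕ l → R) : ω x y = x ⬝ᵥ J l R *ᵥ y :=
  toBilin'_apply' _ _ _

lemma isAlt_symplecticForm : (symplecticForm l R).IsAlt := fun x => by
  simp [symplecticForm_apply, J, fromBlocks_mulVec, dotProduct, Fintype.sum_sum_type, neg_mulVec,
    mul_comm]

lemma symplecticForm_swap (x y : l ⊕ l → R) : ω y x = -ω x y :=
  (isAlt_symplecticForm.neg_eq x y).symm

lemma separatingLeft_symplecticForm : (symplecticForm l K).SeparatingLeft :=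
  separatingLeft_toBilin'_iff.mpr
    (nondegenerate_of_det_ne_zero (isUnit_det_J l K).ne_zero).separatingLeft

lemma exists_symplecticForm_ne_zero {x : l ⊕ l → K} (hx : x ≠ 0) : ∃ w, ω x w ≠ 0 := by
  by_contra! h
  exact hx (separatingLeft_symplecticForm x h)

lemma mem_symplecticGroup_iff_forall {A : Matrix (l ⊕ l) (l ⊕ l) R} :
    A ∈ symplecticGroup l R ↔ ∀ x y, ω (A *ᵥ x) (A *ᵥ y) = ω x y := by
  rw [SymplecticGroup.mem_iff', ← toBilin'.injective.eq_iff, ← toBilin'_comp, LinearMap.ext_iff₂]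
  rfl

lemma mulVec_injective_of_mem_symplecticGroup {g : Matrix (l ⊕ l) (l ⊕ l) K}
    (hg : g ∈ symplecticGroup l K) : Function.Injective g.mulVec :=
  mulVec_injective_iff_isUnit.mpr
    ((isUnit_iff_isUnit_det g).mpr (SymplecticGroup.symplectic_det hg))

variable (l) in
def symplecticTransvection (v : l ⊕ l → R) (c : R) : Matrix (l ⊕ l) (l ⊕ l) R :=
  1 + c • vecMulVec v (J l R *ᵥ v)

lemma symplecticTransvection_mulVec (v : l ⊕ l → R) (c : R) (x : l ⊕ l → R) :
    symplecticTransvection l v c *ᵥ x = x + (c * ω x v) • v := by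
  rw [symplecticTransvection, add_mulVec, one_mulVec, smul_mulVec, vecMulVec_mulVec,
    op_smul_eq_smul, dotProduct_comm, ← symplecticForm_apply, smul_smul]

lemma symplecticTransvection_mem (v : l ⊕ l → R) (c : R) :
    symplecticTransvection l v c ∈ symplecticGroup l R := by
  refine mem_symplecticGroup_iff_forall.mpr fun x y => ?_
  simp only [symplecticTransvection_mulVec, map_add, map_smul, LinearMap.add_apply,
    LinearMap.smul_apply, smul_eq_mul, isAlt_symplecticForm.self_eq_zero, symplecticForm_swap v y]
  ring

lemma exists_symplecticTransvection_mulVec_eq {a b : l ⊕ l → K} (hab : ω a b ≠ 0) :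
    ∃ g ∈ symplecticGroup l K, g *ᵥ a = b ∧ ∀ x, ω x a = ω x b → g *ᵥ x = x := by
  refine ⟨symplecticTransvection l (b - a) (ω a b)⁻¹, symplecticTransvection_mem _ _, ?_,
    fun x hx => ?_⟩
  · rw [symplecticTransvection_mulVec, map_sub, isAlt_symplecticForm.self_eq_zero, sub_zero,
      inv_mul_cancel₀ hab, one_smul, add_sub_cancel]
  · rw [symplecticTransvection_mulVec, map_sub, hx, sub_self, mul_zero, zero_smul, add_zero]

theorem exists_mem_symplecticGroup_mulVec_eq {W : Submodule K (l ⊕ l → K)} {a b : l ⊕ l → K}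
    (hab : b - a ∈ W) (ha : ∃ w ∈ W, ω a w ≠ 0) (hb : ∃ w ∈ W, ω b w ≠ 0) :
    ∃ g ∈ symplecticGroup l K, g *ᵥ a = b ∧ ∀ x, (∀ w ∈ W, ω x w = 0) → g *ᵥ x = x := by
  have fix_of_mem {a b : l ⊕ l → K} (h : b - a ∈ W) (x) (hx : ∀ w ∈ W, ω x w = 0) :
      ω x a = ω x b := by
    have := hx _ h
    rwa [map_sub, sub_eq_zero, eq_comm] at this
  by_cases hab₀ : ω a b = 0
  · -- go through `z = a + w`, where `ω a w ≠ 0 ≠ ω b w`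
    obtain ⟨w, hw, haw, hbw⟩ := LinearMap.exists_mem_apply_ne_zero_and_apply_ne_zero ha hb
    have haz : ω a (a + w) ≠ 0 := by simpa [isAlt_symplecticForm.self_eq_zero] using haw
    have hzb : ω (a + w) b ≠ 0 := by simpa [hab₀, symplecticForm_swap w b] using hbw
    obtain ⟨g₁, hg₁, hg₁a, hg₁W⟩ := exists_symplecticTransvection_mulVec_eq haz
    obtain ⟨g₂, hg₂, hg₂a, hg₂W⟩ := exists_symplecticTransvection_mulVec_eq hzb
    refine ⟨g₂ * g₁, mul_mem hg₂ hg₁, by rw [← mulVec_mulVec, hg₁a, hg₂a], fun x hx => ?_⟩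
    rw [← mulVec_mulVec, hg₁W x (fix_of_mem (by simpa) x hx),
      hg₂W x (fix_of_mem (by simpa [sub_add_eq_sub_sub] using W.sub_mem hab hw) x hx)]
  · obtain ⟨g, hg, hga, hgW⟩ := exists_symplecticTransvection_mulVec_eq hab₀
    exact ⟨g, hg, hga, fun x hx => hgW x (fix_of_mem hab x hx)⟩

theorem exists_mem_symplecticGroup_mulVec_eq_of_ne_zero {a b : l ⊕ l → K} (ha : a ≠ 0)
    (hb : b ≠ 0) : ∃ g ∈ symplecticGroup l K, g *ᵥ a = b := by
  obtain ⟨v, hv⟩ := exists_symplecticForm_ne_zero ha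
  obtain ⟨w, hw⟩ := exists_symplecticForm_ne_zero hb
  obtain ⟨g, hg, hga, -⟩ := exists_mem_symplecticGroup_mulVec_eq (W := ⊤) Submodule.mem_top
    ⟨v, trivial, hv⟩ ⟨w, trivial, hw⟩
  exact ⟨g, hg, hga⟩

theorem exists_mem_symplecticGroup_mulVec_eq_pair {x y x' y' : l ⊕ l → K} (hx : x ≠ 0)
    (hx' : x' ≠ 0) (hy : y ∉ K ∙ x) (hy' : y' ∉ K ∙ x') (h : ω x y = ω x' y') :
    ∃ g ∈ symplecticGroup l K, g *ᵥ x = x' ∧ g *ᵥ y = y' := by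
  obtain ⟨g₁, hg₁, rfl⟩ := exists_mem_symplecticGroup_mulVec_eq_of_ne_zero hx hx'
  have exists_mem_ker {z} (hz : z ∉ K ∙ (g₁ *ᵥ x)) :
      ∃ w ∈ LinearMap.ker (ω (g₁ *ᵥ x)), ω z w ≠ 0 := by
    by_contra! h
    exact hz (separatingLeft_symplecticForm.mem_span_singleton_of_ker_le fun w hw => h w hw)
  have hg₁y : g₁ *ᵥ y ∉ K ∙ (g₁ *ᵥ x) := by
    intro hmem
    obtain ⟨c, hc⟩ := Submodule.mem_span_singleton.mp hmem
    exact hy (Submodule.mem_span_singleton.mpr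
      ⟨c, mulVec_injective_of_mem_symplecticGroup hg₁ (by rw [mulVec_smul, hc])⟩)
  obtain ⟨g₂, hg₂, hg₂y, hg₂x⟩ := exists_mem_symplecticGroup_mulVec_eq
    (by simp [← h, mem_symplecticGroup_iff_forall.mp hg₁]) (exists_mem_ker hg₁y)
    (exists_mem_ker hy')
  exact ⟨g₂ * g₁, mul_mem hg₂ hg₁, by rw [← mulVec_mulVec, hg₂x _ fun w hw => hw],
    by rw [← mulVec_mulVec, hg₂y]⟩

theorem exists_mem_symplecticGroup_mul_vecMulVec_self_mul_transpose {x y : l ⊕ l → K}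
    (hx : x ≠ 0) (hy : y ≠ 0) :
    ∃ g ∈ symplecticGroup l K, g * vecMulVec x x * gᵀ = vecMulVec y y := by
  obtain ⟨g, hg, rfl⟩ := exists_mem_symplecticGroup_mulVec_eq_of_ne_zero hx hy
  exact ⟨g, hg, mul_vecMulVec_mul_transpose g x x⟩

theorem exists_mem_symplecticGroup_mul_vecMulVec_self_add_mul_transpose [IsAlgClosed K]
    {x y x' y' : l ⊕ l → K} (hx : x ≠ 0) (hx' : x' ≠ 0) (hy : y ∉ K ∙ x) (hy' : y' ∉ K ∙ x')
    (h : ω x y = 0 ↔ ω x' y' = 0) : ∃ g ∈ symplecticGroup l K, ∃ c : K, c ≠ 0 ∧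
      g * (vecMulVec x x + vecMulVec y y) * gᵀ = c • (vecMulVec x' x' + vecMulVec y' y') := by
  obtain ⟨d, hd0, hd⟩ : ∃ d ≠ 0, ω x y = d * d * ω x' y' := by
    by_cases h0 : ω x' y' = 0
    · exact ⟨1, one_ne_zero, by simp [h.mpr h0, h0]⟩
    obtain ⟨d, hd⟩ := IsAlgClosed.exists_pow_nat_eq (ω x y / ω x' y') two_pos
    refine ⟨d, ?_, by rw [← pow_two, hd, div_mul_cancel₀ _ h0]⟩
    rintro rfl
    exact h0 (h.mp (by simpa [h0] using hd.symm))
  obtain ⟨g, hg, hgx, hgy⟩ := exists_mem_symplecticGroup_mulVec_eq_pair hx (smul_ne_zero hd0 hx')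
    hy (by rwa [Submodule.span_singleton_smul_eq (IsUnit.mk0 d hd0), Submodule.smul_mem_iff _ hd0])
    (by simp [hd, mul_assoc])
  refine ⟨g, hg, d * d, mul_ne_zero hd0 hd0, ?_⟩
  simp only [Matrix.mul_add, Matrix.add_mul, mul_vecMulVec_mul_transpose, hgx, hgy,
    smul_vecMulVec, vecMulVec_smul, smul_smul, smul_add]

end Symplectic

section Isotropy

variable {n : ℕ} {M : Matrix (Fin n ⊕ Fin n) (Fin n ⊕ Fin n) ℂ}

local notation "ω" => symplecticForm (Fin n) ℂ

lemma hasIsotropicRange_iff : HasIsotropicRange n M ↔ ∀ u v, ω (M *ᵥ u) (M *ᵥ v) = 0 := by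
  simp only [symplecticForm_apply]
  rfl

lemma hasIsotropicRange_mul_mul_transpose_iff {g : Matrix (Fin n ⊕ Fin n) (Fin n ⊕ Fin n) ℂ}
    (hg : g ∈ symplecticGroup (Fin n) ℂ) :
    HasIsotropicRange n (g * M * gᵀ) ↔ HasIsotropicRange n M := by
  have hsurj : Function.Surjective gᵀ.mulVec := mulVec_surjective_iff_isUnit.mpr
    ((isUnit_iff_isUnit_det _).mpr (by simpa using SymplecticGroup.symplectic_det hg))
  simp only [hasIsotropicRange_iff, ← mulVec_mulVec, mem_symplecticGroup_iff_forall.mp hg]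
  exact (hsurj.forall₂ (p := fun u v => ω (M *ᵥ u) (M *ᵥ v) = 0)).symm

lemma hasIsotropicRange_smul_iff {c : ℂ} (hc : c ≠ 0) :
    HasIsotropicRange n (c • M) ↔ HasIsotropicRange n M := by
  simp [hasIsotropicRange_iff, smul_mulVec, hc]

lemma hasIsotropicRange_vecMulVec_self_add_iff {x y : Fin n ⊕ Fin n → ℂ} (hx : x ≠ 0)
    (hy : y ∉ ℂ ∙ x) : HasIsotropicRange n (vecMulVec x x + vecMulVec y y) ↔ ω x y = 0 := by
  have key (u v) : ω ((vecMulVec x x + vecMulVec y y) *ᵥ u) ((vecMulVec x x + vecMulVec y y) *ᵥ v)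
      = ((x ⬝ᵥ u) * (y ⬝ᵥ v) - (y ⬝ᵥ u) * (x ⬝ᵥ v)) * ω x y := by
    simp [add_mulVec, vecMulVec_mulVec, op_smul_eq_smul, isAlt_symplecticForm.self_eq_zero,
      symplecticForm_swap y x]
    ring
  simp only [hasIsotropicRange_iff, key, mul_eq_zero]
  refine ⟨fun h => ?_, fun h _ _ => Or.inr h⟩
  by_contra hxy
  obtain ⟨u, hu⟩ : ∃ u, x ⬝ᵥ u ≠ 0 := by
    by_contra! h
    exact hx (dotProduct_eq_zero x h)
  refine hy (Submodule.mem_span_singleton.mpr ⟨(y ⬝ᵥ u) / (x ⬝ᵥ u), ?_⟩)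
  refine (sub_eq_zero.mp (dotProduct_eq_zero _ fun v => ?_)).symm
  have := (h u v).resolve_right hxy
  rw [sub_dotProduct, smul_dotProduct, smul_eq_mul]
  field_simp
  linear_combination this

end Isotropy

theorem stmt11_general (n : ℕ)
    (M N : Matrix (Fin n ⊕ Fin n) (Fin n ⊕ Fin n) ℂ)
    (hM : Mᵀ = M) (hN : Nᵀ = N) (hM0 : M ≠ 0)
    (hMr : M.rank ≤ 2) :
    ((∃ g ∈ Matrix.symplecticGroup (Fin n) ℂ, ∃ l : ℂ, l ≠ 0 ∧ g * M * gᵀ = l • N) ↔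
      (M.rank = N.rank ∧ (HasIsotropicRange n M ↔ HasIsotropicRange n N))) ∧
    (M.rank = 1 ∨
      (M.rank = 2 ∧ HasIsotropicRange n M) ∨
      (M.rank = 2 ∧ ¬ HasIsotropicRange n M)) := by
  have hM₁ : M.rank ≠ 0 := mt eq_zero_of_rank_eq_zero hM0
  refine ⟨⟨fun ⟨g, hg, c, hc, h⟩ => ⟨?_, ?_⟩, fun ⟨hrank, hiso⟩ => ?_⟩, ?_⟩
  · rw [← rank_mul_mul_transpose (SymplecticGroup.symplectic_det hg), h,
      rank_smul_of_mem_nonZeroDivisors _ (mem_nonZeroDivisors_of_ne_zero hc)]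
  · rw [← hasIsotropicRange_mul_mul_transpose_iff hg, h, hasIsotropicRange_smul_iff hc]
  · obtain h1 | h2 : M.rank = 1 ∨ M.rank = 2 := by omega
    · obtain ⟨x, hx, rfl⟩ := IsSymm.exists_eq_vecMulVec_self_of_rank_eq_one hM h1
      obtain ⟨y, hy, rfl⟩ := IsSymm.exists_eq_vecMulVec_self_of_rank_eq_one hN (hrank ▸ h1)
      obtain ⟨g, hg, h⟩ := exists_mem_symplecticGroup_mul_vecMulVec_self_mul_transpose hx hy
      exact ⟨g, hg, 1, one_ne_zero, by rw [h, one_smul]⟩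
    · obtain ⟨x, y, hx, hy, rfl⟩ := IsSymm.exists_eq_vecMulVec_self_add_of_rank_eq_two hM h2
      obtain ⟨x', y', hx', hy', rfl⟩ :=
        IsSymm.exists_eq_vecMulVec_self_add_of_rank_eq_two hN (hrank ▸ h2)
      rw [hasIsotropicRange_vecMulVec_self_add_iff hx hy,
        hasIsotropicRange_vecMulVec_self_add_iff hx' hy'] at hiso
      exact exists_mem_symplecticGroup_mul_vecMulVec_self_add_mul_transpose hx hx' hy hy' hiso
  · obtain h | h : M.rank = 1 ∨ M.rank = 2 := by omega
    · exact .inl h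
    · exact .inr ((em _).imp (⟨h, ·⟩) (⟨h, ·⟩))

/-- Two nonzero symmetric `2n×2n` complex matrices of rank at most two are congruent under
`Sp₂ₙ(ℂ)` up to a nonzero scalar iff they have the same rank and simultaneously isotropic
ranges; every such matrix is exactly one of: rank one; rank two with `J`-isotropic range;
rank two with non-isotropic range. -/
theorem stmt11 (n : ℕ) (hn : 1 ≤ n)
    (M N : Matrix (Fin n ⊕ Fin n) (Fin n ⊕ Fin n) ℂ)
    (hM : Mᵀ = M) (hN : Nᵀ = N) (hM0 : M ≠ 0) (hN0 : N ≠ 0)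
    (hMr : M.rank ≤ 2) (hNr : N.rank ≤ 2) :
    ((∃ g ∈ Matrix.symplecticGroup (Fin n) ℂ, ∃ l : ℂ, l ≠ 0 ∧ g * M * gᵀ = l • N) ↔
      (M.rank = N.rank ∧ (HasIsotropicRange n M ↔ HasIsotropicRange n N))) ∧
    (M.rank = 1 ∨
      (M.rank = 2 ∧ HasIsotropicRange n M) ∨
      (M.rank = 2 ∧ ¬ HasIsotropicRange n M)) :=
  stmt11_general n M N hM hN hM0 hMr
end
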